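/- Let γ = (α, σ) : ℝ → E × ℝ be a gradient flow line of the split interpolation function F. If σ(t₁) ∈ (0,1) for some t₁ ∈ ℝ, then σ(t) ∈ (0,1) for all t ∈ ℝ, σ is strictly increasing, and σ(t) → 0 as t → -∞ and σ(t) → 1 as t → +∞. That is, every gradient flow line of F whose ℝ-coordinate is not constant travels from the slice E × {0} (at -∞) to the slice E × {1} (at +∞). -/

import Mathlib

open Filter Topology

/-- The interpolation profile `h(s) = s³ - (3/2)s²`. -/
noncomputable def hfun (s : ℝ) : ℝ := s ^ 3 - (3 / 2) * s ^ 2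

/-- The split interpolation function `F(x,s) = f(x) + C·h(s)` on `E × ℝ`, where `E × ℝ`
carries the product (L²) inner product. -/
noncomputable def Fsplit {E : Type*} [NormedAddCommGroup E] [InnerProductSpace ℝ E]
    (f : E → ℝ) (C : ℝ) (p : WithLp 2 (E × ℝ)) : ℝ :=
  f ((WithLp.equiv 2 (E × ℝ)) p).1 + C * hfun ((WithLp.equiv 2 (E × ℝ)) p).2

/-!
Since `-C h'(s) = 3C s(1 - s)`, the `ℝ`-coordinate of a flow line of `F` solves the logistic
equation `σ' = k σ (1 - σ)` with `k = 3C > 0`, whatever `f` and `α` are. Along a solution,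
`σ (1 - σ)` solves a linear equation, so it keeps its sign and `σ` cannot leave `(0,1)`; inside
`(0,1)` the logit `log σ - log (1 - σ)` has derivative `k`, so `σ` is the sigmoid of an affine
function of slope `k`.
-/

open Real Set

theorem hasDerivAt_hfun (s : ℝ) : HasDerivAt hfun (3 * s ^ 2 - 3 * s) s := by
  have := (hasDerivAt_pow 3 s).sub ((hasDerivAt_pow 2 s).const_mul (3 / 2 : ℝ))
  exact this.congr_deriv (by push_cast; ring)

theorem hasGradientAt_Fsplit {E : Type*} [NormedAddCommGroup E] [InnerProductSpace ℝ E]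
    [CompleteSpace E] {f : E → ℝ} {g x : E} (hf : HasGradientAt f g x) (C s : ℝ) :
    HasGradientAt (Fsplit f C) (WithLp.toLp 2 (g, C * (3 * s ^ 2 - 3 * s)))
      (WithLp.toLp 2 (x, s)) := by
  rw [hasGradientAt_iff_hasFDerivAt] at hf ⊢
  have hF := (hf.comp (WithLp.toLp 2 (x, s)) (WithLp.fstL 2 ℝ E ℝ).hasFDerivAt).add
    (((hasDerivAt_hfun s).comp_hasFDerivAt (WithLp.toLp 2 (x, s))
      (WithLp.sndL 2 ℝ E ℝ).hasFDerivAt).const_mul C)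
  refine hF.congr_fderiv (ContinuousLinearMap.ext fun v => ?_)
  simp only [add_apply, ContinuousLinearMap.comp_apply, WithLp.fstL_apply,
    InnerProductSpace.toDual_apply_apply, smul_apply, WithLp.sndL_apply,
    smul_eq_mul, WithLp.prod_inner_apply, WithLp.ofLp_fst, WithLp.ofLp_snd, RCLike.inner_apply,
    Real.ringHom_apply, add_right_inj]
  ring

theorem eq_mul_exp_integral_of_hasDerivAt {r a : ℝ → ℝ} (ha : Continuous a)
    (hr : ∀ t, HasDerivAt r (a t * r t) t) (t₀ t : ℝ) :
    r t = r t₀ * exp (∫ u in t₀..t, a u) := by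
  set A : ℝ → ℝ := fun t => ∫ u in t₀..t, a u
  have hA (t : ℝ) : HasDerivAt A (a t) t :=
    intervalIntegral.integral_hasDerivAt_right (ha.intervalIntegrable _ _)
      (ha.stronglyMeasurableAtFilter _ _) ha.continuousAt
  have hw (t : ℝ) : HasDerivAt (fun u => r u * exp (-A u)) 0 t :=
    ((hr t).mul (hA t).neg.exp).congr_deriv (by ring)
  have hconst := is_const_of_deriv_eq_zero (fun t => (hw t).differentiableAt)
    (fun t => (hw t).deriv) t t₀
  simp only [A, intervalIntegral.integral_same, neg_zero, exp_zero, mul_one] at hconst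
  rw [← hconst, mul_assoc, ← exp_add, neg_add_cancel, exp_zero, mul_one]

theorem sigmoid_log_sub_log {p : ℝ} (hp : p ∈ Ioo 0 1) : sigmoid (log p - log (1 - p)) = p := by
  rw [sigmoid_def, neg_sub, exp_sub, exp_log hp.1, exp_log (sub_pos.2 hp.2)]
  have : p ≠ 0 := hp.1.ne'
  field_simp
  ring

section Logistic

variable {k : ℝ} {σ : ℝ → ℝ}

theorem mem_Ioo_of_hasDerivAt_logistic (hσ : ∀ t, HasDerivAt σ (k * σ t * (1 - σ t)) t)
    {t₀ : ℝ} (h₀ : σ t₀ ∈ Ioo 0 1) (t : ℝ) : σ t ∈ Ioo 0 1 := by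
  have hcont : Continuous σ := continuous_iff_continuousAt.2 fun t => (hσ t).continuousAt
  have hr (t : ℝ) : HasDerivAt (fun u => σ u * (1 - σ u))
      (k * (1 - 2 * σ t) * (σ t * (1 - σ t))) t :=
    ((hσ t).mul ((hσ t).const_sub 1)).congr_deriv (by ring)
  have hpos : 0 < σ t * (1 - σ t) := by
    rw [eq_mul_exp_integral_of_hasDerivAt (by fun_prop) hr t₀ t]
    exact mul_pos (mul_pos h₀.1 (sub_pos.2 h₀.2)) (exp_pos _)
  constructor <;> nlinarith

theorem exists_eq_sigmoid_of_hasDerivAt_logistic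
    (hσ : ∀ t, HasDerivAt σ (k * σ t * (1 - σ t)) t) {t₀ : ℝ} (h₀ : σ t₀ ∈ Ioo 0 1) :
    ∃ c, ∀ t, σ t = sigmoid (k * t + c) := by
  have hband := mem_Ioo_of_hasDerivAt_logistic hσ h₀
  set g : ℝ → ℝ := fun t => log (σ t) - log (1 - σ t)
  have hg (t : ℝ) : HasDerivAt (fun u => g u - k * u) 0 t := by
    have h0 := (hband t).1.ne'
    have h1 := (sub_pos.2 (hband t).2).ne'
    refine (((hσ t).log h0).sub (((hσ t).const_sub 1).log h1) |>.sub
      ((hasDerivAt_id t).const_mul k)).congr_deriv ?_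
    field_simp
    ring
  refine ⟨g 0, fun t => ?_⟩
  have hconst := is_const_of_deriv_eq_zero (fun t => (hg t).differentiableAt)
    (fun t => (hg t).deriv) t 0
  simp only [mul_zero, sub_zero] at hconst
  rw [← hconst, add_sub_cancel, sigmoid_log_sub_log (hband t)]

end Logistic

/-- If the ℝ-component `σ` of a gradient flow line `γ = (α, σ)` of the split
interpolation function `F` lies in `(0,1)` at some time, then it lies in `(0,1)` for all
times, is strictly increasing, and travels from `0` (at `-∞`) to `1` (at `+∞`). -/
theorem flow_crosses_band {E : Type*} [NormedAddCommGroup E] [InnerProductSpace ℝ E]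
    [CompleteSpace E] (f : E → ℝ) (hf : Differentiable ℝ f) (C : ℝ) (hC : 0 < C)
    (α : ℝ → E) (σ : ℝ → ℝ)
    (hflow : ∀ t : ℝ, HasDerivAt (fun u => (WithLp.equiv 2 (E × ℝ)).symm (α u, σ u))
        (-(gradient (Fsplit f C) ((WithLp.equiv 2 (E × ℝ)).symm (α t, σ t)))) t)
    (hband : ∃ t₁ : ℝ, σ t₁ ∈ Set.Ioo (0 : ℝ) 1) :
    (∀ t : ℝ, σ t ∈ Set.Ioo (0 : ℝ) 1) ∧
    StrictMono σ ∧
    Tendsto σ atBot (𝓝 0) ∧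
    Tendsto σ atTop (𝓝 1) := by
  have hσ (t : ℝ) : HasDerivAt σ (3 * C * σ t * (1 - σ t)) t := by
    have h := (WithLp.sndL 2 ℝ E ℝ).hasFDerivAt.comp_hasDerivAt t (hflow t)
    rw [WithLp.equiv_symm_apply,
      (hasGradientAt_Fsplit (hf (α t)).hasGradientAt C (σ t)).gradient] at h
    exact h.congr_deriv (by simp only [WithLp.sndL_apply, WithLp.neg_snd, WithLp.toLp_snd]; ring)
  obtain ⟨t₁, h₁⟩ := hband
  obtain ⟨c, rfl⟩ : ∃ c, σ = fun t => sigmoid (3 * C * t + c) :=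
    (exists_eq_sigmoid_of_hasDerivAt_logistic hσ h₁).imp fun _ h => funext h
  have hk : 0 < 3 * C := by positivity
  have hlin_mono : StrictMono fun t => 3 * C * t + c :=
    (strictMono_mul_left_of_pos hk).add_const c
  have hlin_top : Tendsto (fun t => 3 * C * t + c) atTop atTop :=
    tendsto_atTop_add_const_right _ c (tendsto_id.const_mul_atTop hk)
  have hlin_bot : Tendsto (fun t => 3 * C * t + c) atBot atBot :=
    tendsto_atBot_add_const_right _ c (tendsto_id.const_mul_atBot hk)
  exact ⟨fun t => ⟨sigmoid_pos _, sigmoid_lt_one _⟩,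
    sigmoid_strictMono.comp hlin_mono,
    tendsto_sigmoid_atBot.comp hlin_bot, tendsto_sigmoid_atTop.comp hlin_top⟩
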